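/- arXiv:1112.4658 — 8 statements merged into one kernel-verified Lean document; each statement's English description precedes it below -/
import Mathlib

section
/- Let G : [0,∞) → [0,∞) be continuous, strictly increasing, with G(0) = 0. Then the function y ↦ G(y)/y is unbounded on (0,∞) (i.e. sup_{y>0} G(y)/y = +∞) if and only if there exists β₀ > 0 such that for every β with 0 < β ≤ β₀ the map y ↦ G(βy) has a nonzero fixed point, i.e. there exists y > 0 with G(βy) = y. -/
open Set Filter Topology

/-! A positive fixed point of `y ↦ G (β * y)` is the same as a point `z = β * y > 0` with
`G z / z = β⁻¹`. So fixed points for arbitrarily small `β` make `G y / y` unbounded. Conversely,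
for small `β` continuity at `0` gives `G (β * 1) < 1`, unboundedness gives some `y₁` with
`G (β * y₁) > y₁`, and the intermediate value theorem yields a fixed point between `1` and `y₁`. -/

theorem exists_pos_apply_eq_self_of_lt_of_gt {f : ℝ → ℝ} (hf : ContinuousOn f (Ioi 0)) {a b : ℝ}
    (ha : 0 < a) (hb : 0 < b) (hfa : f a < a) (hfb : b < f b) : ∃ y > 0, f y = y := by
  have hsub : uIcc a b ⊆ Ioi 0 := fun y hy => lt_of_lt_of_le (lt_min ha hb) hy.1
  have hcont : ContinuousOn (fun y => f y - y) (uIcc a b) :=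
    (hf.mono hsub).sub continuousOn_id
  have hzero : (0 : ℝ) ∈ uIcc (f a - a) (f b - b) :=
    mem_uIcc.mpr (Or.inl ⟨by linarith, by linarith⟩)
  obtain ⟨y, hy, hfy⟩ := intermediate_value_uIcc hcont hzero
  exact ⟨y, hsub hy, sub_eq_zero.mp hfy⟩

theorem exists_pos_apply_mul_eq_of_unbounded {G : ℝ → ℝ} (hG : ContinuousOn G (Ici 0))
    (hunb : ∀ M : ℝ, ∃ y > 0, M < G y / y) {β : ℝ} (hβ : 0 < β) (hGβ : G β < 1) :
    ∃ y > 0, G (β * y) = y := by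
  have hcont : ContinuousOn (fun y => G (β * y)) (Ioi 0) :=
    hG.comp (continuousOn_const.mul continuousOn_id)
      fun y hy => mem_Ici.mpr (mul_pos hβ hy).le
  obtain ⟨z, hz, hGz⟩ := hunb β⁻¹
  have hlarge : z / β < G (β * (z / β)) := by
    rw [mul_div_cancel₀ z hβ.ne', div_lt_iff₀ hβ]
    rwa [inv_lt_iff_one_lt_mul₀ hβ, div_mul_eq_mul_div, one_lt_div hz] at hGz
  exact exists_pos_apply_eq_self_of_lt_of_gt hcont one_pos (div_pos hz hβ) (by rwa [mul_one]) hlarge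

theorem apply_div_self_of_apply_mul_eq {G : ℝ → ℝ} {β y : ℝ} (hy : 0 < y)
    (hfix : G (β * y) = y) : G (β * y) / (β * y) = β⁻¹ := by
  rw [hfix, div_mul_cancel_right₀ hy.ne']

theorem unbounded_of_exists_apply_mul_eq {G : ℝ → ℝ} {β₀ : ℝ} (hβ₀ : 0 < β₀)
    (hfix : ∀ β : ℝ, 0 < β → β ≤ β₀ → ∃ y > 0, G (β * y) = y) (M : ℝ) :
    ∃ y > 0, M < G y / y := by
  have hsmall : ∀ᶠ β in 𝓝[>] (0 : ℝ), M < β⁻¹ ∧ β ∈ Ioc 0 β₀ :=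
    (tendsto_inv_nhdsGT_zero.eventually_gt_atTop M).and (Ioc_mem_nhdsGT hβ₀)
  obtain ⟨β, hM, hβ, hβ₀⟩ := hsmall.exists
  obtain ⟨y, hy, hGy⟩ := hfix β hβ hβ₀
  exact ⟨β * y, mul_pos hβ hy, by rwa [apply_div_self_of_apply_mul_eq hy hGy]⟩

theorem unbounded_iff_exists_beta_fixed_point_general
    (G : ℝ → ℝ)
    (hGcont : ContinuousOn G (Ici 0))
    (hG0 : G 0 = 0) :
    (∀ M : ℝ, ∃ y > 0, M < G y / y) ↔
      ∃ β₀ > 0, ∀ β : ℝ, 0 < β → β ≤ β₀ → ∃ y > 0, G (β * y) = y := by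
  refine ⟨fun hunb => ?_, fun ⟨β₀, hβ₀, hfix⟩ => unbounded_of_exists_apply_mul_eq hβ₀ hfix⟩
  have hGsmall : ∀ᶠ x in 𝓝[≥] (0 : ℝ), G x < 1 :=
    (hGcont 0 self_mem_Ici).eventually_lt_const (by rw [hG0]; exact one_pos)
  obtain ⟨β₀, hβ₀, hsub⟩ := mem_nhdsGE_iff_exists_Icc_subset.mp hGsmall
  exact ⟨β₀, hβ₀, fun β hβ hββ₀ =>
    exists_pos_apply_mul_eq_of_unbounded hGcont hunb hβ (hsub ⟨hβ.le, hββ₀⟩)⟩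

/-- **Lemma 1 (i).** For a nonlinearity `G : [0,∞) → [0,∞)` that is continuous, strictly
increasing and satisfies `G 0 = 0`, the map `y ↦ G y / y` is unbounded on `(0,∞)` if and
only if there exists `β₀ > 0` such that for every `0 < β ≤ β₀` the map `y ↦ G (β y)` has a
nonzero (positive) fixed point. -/
theorem unbounded_iff_exists_beta_fixed_point
    (G : ℝ → ℝ)
    (hGcont : ContinuousOn G (Ici 0))
    (hGmono : StrictMonoOn G (Ici 0))
    (hGnonneg : ∀ y, 0 ≤ y → 0 ≤ G y)
    (hG0 : G 0 = 0) :
    (∀ M : ℝ, ∃ y > 0, M < G y / y) ↔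
      ∃ β₀ > 0, ∀ β : ℝ, 0 < β → β ≤ β₀ → ∃ y > 0, G (β * y) = y :=
  unbounded_iff_exists_beta_fixed_point_general G hGcont hG0
end

section
/- Let G : [0,∞) → [0,∞) be continuous, strictly increasing, with G(0) = 0. Then the function y ↦ G(y)/y is unbounded on (0,∞) if and only if for every A ≥ 0 there exists β_A > 0 such that for all α with 0 ≤ α ≤ A and all β with 0 < β ≤ β_A the map y ↦ G(α + βy) has a nonzero fixed point, i.e. there exists y > 0 with G(α + βy) = y. -/
open Set

/-! A positive fixed point `y` of `y ↦ G (α + β y)` corresponds to a point `z = α + β y > 0`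
with `α + β G z = z`, through `y = G z`. For `α = 0` such a `z` has `G z / z = 1 / β`, so fixed
points for all small `β` force `G y / y` to be unbounded. Conversely, if `G z₀ / z₀ > 1 / β` then
`z ↦ α + β G z` lies above the diagonal at `z₀`, and below it at `A + 1` once
`β ≤ 1 / G (A + 1)`, so the intermediate value theorem produces `z`. -/

lemma pos_of_strictMonoOn_Ici_of_map_zero {G : ℝ → ℝ} (hGmono : StrictMonoOn G (Ici 0))
    (hG0 : G 0 = 0) {y : ℝ} (hy : 0 < y) : 0 < G y :=
  hG0 ▸ hGmono self_mem_Ici hy.le hy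

lemma exists_pos_fixedPoint_of_continuousOn_Ici {f : ℝ → ℝ} (hf : ContinuousOn f (Ici 0))
    {a b : ℝ} (ha : 0 < a) (hb : 0 < b) (hfa : a ≤ f a) (hfb : f b ≤ b) :
    ∃ z > 0, f z = z := by
  have hsub : uIcc a b ⊆ Ici 0 := fun z hz => (le_inf ha.le hb.le).trans hz.1
  have hcont : ContinuousOn (fun z => f z - z) (uIcc a b) :=
    (hf.mono hsub).sub continuousOn_id
  have hzero : (0 : ℝ) ∈ uIcc (f a - a) (f b - b) :=
    mem_uIcc.mpr (Or.inr ⟨by linarith, by linarith⟩)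
  obtain ⟨z, hz, hfz⟩ := intermediate_value_uIcc hcont hzero
  exact ⟨z, (lt_inf_iff.mpr ⟨ha, hb⟩).trans_le hz.1, sub_eq_zero.mp hfz⟩

lemma unbounded_div_self_of_exists_fixedPoint {G : ℝ → ℝ} {β₀ : ℝ} (hβ₀ : 0 < β₀)
    (hfix : ∀ β, 0 < β → β ≤ β₀ → ∃ y > 0, G (β * y) = y) (M : ℝ) :
    ∃ y > 0, M < G y / y := by
  set β := min β₀ (|M| + 1)⁻¹
  have hβ : 0 < β := lt_min hβ₀ (by positivity)
  obtain ⟨y, hy, hGy⟩ := hfix β hβ (min_le_left _ _)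
  have hratio : G (β * y) / (β * y) = β⁻¹ := by
    rw [hGy]; field_simp
  have hβinv : |M| + 1 ≤ β⁻¹ := le_inv_of_le_inv₀ hβ (min_le_right _ _)
  exact ⟨β * y, by positivity, by rw [hratio]; linarith [le_abs_self M]⟩

lemma exists_fixedPoint_of_unbounded_div_self {G : ℝ → ℝ} (hGcont : ContinuousOn G (Ici 0))
    (hGmono : StrictMonoOn G (Ici 0)) (hG0 : G 0 = 0) (hunb : ∀ M : ℝ, ∃ y > 0, M < G y / y)
    {A α β : ℝ} (hα : 0 ≤ α) (hαA : α ≤ A) (hβ : 0 < β) (hβA : β ≤ (G (A + 1))⁻¹) :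
    ∃ y > 0, G (α + β * y) = y := by
  have hA : 0 < A + 1 := by linarith
  have hGA : 0 < G (A + 1) := pos_of_strictMonoOn_Ici_of_map_zero hGmono hG0 hA
  obtain ⟨z₀, hz₀, hGz₀⟩ := hunb β⁻¹
  have habove : z₀ ≤ α + β * G z₀ := by
    rw [lt_div_iff₀ hz₀, inv_mul_lt_iff₀ hβ] at hGz₀
    linarith
  have hbelow : α + β * G (A + 1) ≤ A + 1 := by
    have : β * G (A + 1) ≤ 1 :=
      calc β * G (A + 1) ≤ (G (A + 1))⁻¹ * G (A + 1) := by gcongr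
        _ = 1 := inv_mul_cancel₀ hGA.ne'
    linarith
  obtain ⟨z, hz, hfz⟩ := exists_pos_fixedPoint_of_continuousOn_Ici (f := fun z => α + β * G z)
    (continuousOn_const.add (continuousOn_const.mul hGcont)) hz₀ hA habove hbelow
  exact ⟨G z, pos_of_strictMonoOn_Ici_of_map_zero hGmono hG0 hz, by rw [hfz]⟩

theorem unbounded_iff_exists_alpha_beta_fixed_point_general
    (G : ℝ → ℝ)
    (hGcont : ContinuousOn G (Ici 0))
    (hGmono : StrictMonoOn G (Ici 0))
    (hG0 : G 0 = 0) :
    (∀ M : ℝ, ∃ y > 0, M < G y / y) ↔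
      ∀ A : ℝ, 0 ≤ A → ∃ βA > 0, ∀ α β : ℝ, 0 ≤ α → α ≤ A → 0 < β → β ≤ βA →
        ∃ y > 0, G (α + β * y) = y := by
  constructor
  · intro hunb A hA
    have hGA : 0 < G (A + 1) := pos_of_strictMonoOn_Ici_of_map_zero hGmono hG0 (by linarith)
    exact ⟨(G (A + 1))⁻¹, inv_pos.mpr hGA, fun α β hα hαA hβ hβA =>
      exists_fixedPoint_of_unbounded_div_self hGcont hGmono hG0 hunb hα hαA hβ hβA⟩
  · intro hfix
    obtain ⟨β₀, hβ₀, hfix₀⟩ := hfix 0 le_rfl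
    exact unbounded_div_self_of_exists_fixedPoint hβ₀ fun β hβ hββ₀ => by
      simpa only [zero_add] using hfix₀ 0 β le_rfl le_rfl hβ hββ₀

/-- **Lemma 1 (ii).** For a nonlinearity `G : [0,∞) → [0,∞)` that is continuous, strictly
increasing and satisfies `G 0 = 0`, the map `y ↦ G y / y` is unbounded on `(0,∞)` if and
only if for every `A ≥ 0` there is `β_A > 0` such that for all `0 ≤ α ≤ A` and all
`0 < β ≤ β_A` the map `y ↦ G (α + β y)` has a nonzero (positive) fixed point. -/
theorem unbounded_iff_exists_alpha_beta_fixed_point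
    (G : ℝ → ℝ)
    (hGcont : ContinuousOn G (Ici 0))
    (hGmono : StrictMonoOn G (Ici 0))
    (hGnonneg : ∀ y, 0 ≤ y → 0 ≤ G y)
    (hG0 : G 0 = 0) :
    (∀ M : ℝ, ∃ y > 0, M < G y / y) ↔
      ∀ A : ℝ, 0 ≤ A → ∃ βA > 0, ∀ α β : ℝ, 0 ≤ α → α ≤ A → 0 < β → β ≤ βA →
        ∃ y > 0, G (α + β * y) = y :=
  unbounded_iff_exists_alpha_beta_fixed_point_general G hGcont hGmono hG0
end

section
/- Let K be a kernel and G a nonlinearity satisfying the general conditions, and fix collocation parameters c₁ = 0 < c₂ ≤ 1 (case 2 collocation). Then G(y)/y is unbounded on (0,∞) if and only if there exists H₀ > 0 such that for every h ∈ (0,H₀] there exists Z > 0 satisfying Z = G( h·∫₀^{c₂} K(c₂h, sh)·(s/c₂) ds · Z ), i.e. there are nontrivial collocation solutions on [0,t₁] with t₁ = h for all 0 < h ≤ H₀ (no continuity hypothesis on the kernel is needed). -/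
open Set MeasureTheory Filter Topology

/-!
Substituting `y = A Z` turns the first-step equation `Z = G (A Z)`, `A = h B(h) > 0`,
into `G y / y = 1 / A`. Since `0 < h B(h) ≤ 𝒦(c₂ h) → 0` as `h → 0⁺`, positive solutions
exist for all small `h` iff the slope `G y / y` attains every sufficiently large value, and
by continuity of the slope on `(0, ∞)` this happens iff it is unbounded.
-/

section Slope

variable {G : ℝ → ℝ}

theorem exists_pos_eq_comp_mul_iff {A : ℝ} (hA : 0 < A) :
    (∃ Z > 0, Z = G (A * Z)) ↔ ∃ y > 0, G y / y = A⁻¹ := by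
  constructor
  · rintro ⟨Z, hZ, hZG⟩
    refine ⟨A * Z, mul_pos hA hZ, ?_⟩
    rw [← hZG]
    field_simp
  · rintro ⟨y, hy, hGy⟩
    refine ⟨y / A, div_pos hy hA, ?_⟩
    rw [mul_div_cancel₀ y hA.ne', (div_eq_iff hy.ne').1 hGy]
    field_simp

theorem Ici_subset_image_slope_of_unbounded (hG : ContinuousOn G (Ioi 0))
    (hU : ∀ M : ℝ, ∃ y > 0, M < G y / y) :
    Ici (G 1) ⊆ (fun y => G y / y) '' Ioi 0 := by
  intro m hm
  obtain ⟨y, hy, hmy⟩ := hU m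
  have hconn : IsPreconnected ((fun y => G y / y) '' Ioi 0) :=
    isPreconnected_Ioi.image _ (hG.div continuousOn_id fun x hx => ne_of_gt hx)
  exact hconn.Icc_subset ⟨1, mem_Ioi.2 one_pos, div_one _⟩ ⟨y, hy, rfl⟩ ⟨hm, hmy.le⟩

theorem unbounded_slope_iff_exists_pos_eq_comp_mul (hG : ContinuousOn G (Ioi 0))
    {A : ℝ → ℝ} (hA : Tendsto A (𝓝[>] 0) (𝓝[>] 0)) :
    (∀ M : ℝ, ∃ y > 0, M < G y / y) ↔
      ∃ H₀ > (0:ℝ), ∀ h : ℝ, 0 < h → h ≤ H₀ → ∃ Z > 0, Z = G (A h * Z) := by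
  have hpos : ∀ᶠ h in 𝓝[>] 0, 0 < A h := hA.eventually self_mem_nhdsWithin
  have hinv : Tendsto (fun h => (A h)⁻¹) (𝓝[>] 0) atTop := hA.inv_tendsto_nhdsGT_zero
  constructor
  · intro hU
    obtain ⟨H₀, hH₀, hsmall⟩ :=
      mem_nhdsGT_iff_exists_Ioc_subset.1 (hpos.and (hinv.eventually_ge_atTop (G 1)))
    refine ⟨H₀, hH₀, fun h hh hhH => ?_⟩
    obtain ⟨hAh, hGA⟩ := hsmall ⟨hh, hhH⟩
    obtain ⟨y, hy, hyA⟩ := Ici_subset_image_slope_of_unbounded hG hU hGA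
    exact (exists_pos_eq_comp_mul_iff hAh).2 ⟨y, hy, hyA⟩
  · rintro ⟨H₀, hH₀, hsol⟩ M
    obtain ⟨h, ⟨hh, hhH⟩, hAh, hMA⟩ :=
      (Filter.Eventually.and (Ioc_mem_nhdsGT hH₀)
        (hpos.and (hinv.eventually_gt_atTop M))).exists
    obtain ⟨y, hy, hyA⟩ := (exists_pos_eq_comp_mul_iff hAh).1 (hsol h hh hhH)
    exact ⟨y, hy, hyA ▸ hMA⟩

end Slope

theorem intervalIntegral.integral_mul_pos_of_integral_pos {f g : ℝ → ℝ} {a b : ℝ}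
    (hab : a ≤ b) (hf : ∀ x ∈ Ioc a b, 0 ≤ f x) (hg : ∀ x ∈ Ioc a b, 0 < g x)
    (hfi : IntervalIntegrable f volume a b)
    (hfgi : IntervalIntegrable (fun x => f x * g x) volume a b)
    (hpos : 0 < ∫ x in a..b, f x) : 0 < ∫ x in a..b, f x * g x := by
  have hf' : 0 ≤ᵐ[volume.restrict (uIoc a b)] f := by
    rw [uIoc_of_le hab]
    exact ae_restrict_of_forall_mem measurableSet_Ioc hf
  have hfg' : 0 ≤ᵐ[volume.restrict (uIoc a b)] fun x => f x * g x := by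
    rw [uIoc_of_le hab]
    exact ae_restrict_of_forall_mem measurableSet_Ioc fun x hx =>
      mul_nonneg (hf x hx) (hg x hx).le
  obtain ⟨hab', hsupp⟩ := (integral_pos_iff_support_of_nonneg_ae' hf' hfi).1 hpos
  refine (integral_pos_iff_support_of_nonneg_ae' hfg' hfgi).2 ⟨hab', ?_⟩
  have hsupp_eq :
      Function.support (fun x => f x * g x) ∩ Ioc a b = Function.support f ∩ Ioc a b := by
    ext x
    simp only [Function.mem_support, mem_inter_iff, and_congr_left_iff]
    exact fun hx => ⟨left_ne_zero_of_mul, fun hfx => mul_ne_zero hfx (hg x hx).ne'⟩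
  rwa [hsupp_eq]

section Kernel

variable {K : ℝ → ℝ → ℝ} {c h : ℝ}

/-- The coefficient `h B` of the first-step collocation equation `Z = G (h B Z)`. -/
noncomputable def firstStepCoeff (K : ℝ → ℝ → ℝ) (c h : ℝ) : ℝ :=
  h * ∫ s in (0:ℝ)..c, K (c * h) (s * h) * (s / c)

theorem intervalIntegrable_kernel_comp_mul (hK : LocallyIntegrable (K (c * h)) volume)
    (hh : 0 < h) : IntervalIntegrable (fun s => K (c * h) (s * h)) volume 0 c := by
  have hKi : IntervalIntegrable (K (c * h)) volume 0 (c * h) :=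
    (hK.integrableOn_isCompact isCompact_uIcc).intervalIntegrable
  simpa [mul_div_cancel_right₀ _ hh.ne'] using hKi.comp_mul_right (c := h)

theorem integral_kernel_comp_mul (hh : 0 < h) :
    ∫ s in (0:ℝ)..c, K (c * h) (s * h) = h⁻¹ * ∫ s in (0:ℝ)..c * h, K (c * h) s := by
  simpa using intervalIntegral.integral_comp_mul_right (a := 0) (b := c) (K (c * h)) hh.ne'

theorem firstStepCoeff_le (hK_nonneg : ∀ t s, 0 ≤ K t s)
    (hKi : IntervalIntegrable (fun s => K (c * h) (s * h)) volume 0 c)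
    (hc : c ∈ Ioc 0 1) (hh : 0 < h) :
    firstStepCoeff K c h ≤ ∫ s in (0:ℝ)..c * h, K (c * h) s := by
  have hweight : ∫ s in (0:ℝ)..c, K (c * h) (s * h) * (s / c) ≤
      ∫ s in (0:ℝ)..c, K (c * h) (s * h) :=
    intervalIntegral.integral_mono_on hc.1.le (hKi.mul_continuousOn (by fun_prop)) hKi
      fun s hs => mul_le_of_le_one_right (hK_nonneg _ _) (div_le_one_of_le₀ hs.2 hc.1.le)
  calc firstStepCoeff K c h ≤ h * ∫ s in (0:ℝ)..c, K (c * h) (s * h) :=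
        mul_le_mul_of_nonneg_left hweight hh.le
    _ = ∫ s in (0:ℝ)..c * h, K (c * h) s := by
        rw [integral_kernel_comp_mul hh, mul_inv_cancel_left₀ hh.ne']

theorem firstStepCoeff_pos (hK_nonneg : ∀ t s, 0 ≤ K t s)
    (hKi : IntervalIntegrable (fun s => K (c * h) (s * h)) volume 0 c) (hc : 0 < c) (hh : 0 < h)
    (hpos : 0 < ∫ s in (0:ℝ)..c * h, K (c * h) s) : 0 < firstStepCoeff K c h := by
  refine mul_pos hh (intervalIntegral.integral_mul_pos_of_integral_pos hc.le
    (fun _ _ => hK_nonneg _ _) (fun s hs => div_pos hs.1 hc) hKi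
    (hKi.mul_continuousOn (by fun_prop)) ?_)
  rw [integral_kernel_comp_mul hh]
  exact mul_pos (inv_pos.2 hh) hpos

theorem tendsto_firstStepCoeff (hK_nonneg : ∀ t s, 0 ≤ K t s)
    (hK_loc : ∀ t > (0:ℝ), LocallyIntegrable (K t) volume)
    (hK_pos : ∀ t > (0:ℝ), 0 < ∫ s in (0:ℝ)..t, K t s)
    (hK_lim : Tendsto (fun t => ∫ s in (0:ℝ)..t, K t s) (𝓝[>] 0) (𝓝 0)) (hc : c ∈ Ioc 0 1) :
    Tendsto (firstStepCoeff K c) (𝓝[>] 0) (𝓝[>] 0) := by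
  have hKi : ∀ h > 0, IntervalIntegrable (fun s => K (c * h) (s * h)) volume 0 c :=
    fun h hh => intervalIntegrable_kernel_comp_mul (hK_loc _ (mul_pos hc.1 hh)) hh
  have hpos : ∀ᶠ h in 𝓝[>] 0, 0 < firstStepCoeff K c h :=
    eventually_nhdsWithin_of_forall fun h hh =>
      firstStepCoeff_pos hK_nonneg (hKi h hh) hc.1 hh (hK_pos _ (mul_pos hc.1 hh))
  have hscale : Tendsto (fun h => c * h) (𝓝[>] 0) (𝓝[>] 0) :=
    tendsto_nhdsWithin_iff.2
      ⟨((continuous_const_mul c).tendsto' 0 0 (mul_zero c)).mono_left nhdsWithin_le_nhds,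
        eventually_nhdsWithin_of_forall fun h hh => mul_pos hc.1 hh⟩
  refine tendsto_nhdsWithin_iff.2 ⟨?_, hpos⟩
  refine tendsto_of_tendsto_of_tendsto_of_le_of_le' tendsto_const_nhds (hK_lim.comp hscale)
    (hpos.mono fun _ => le_of_lt) ?_
  exact eventually_nhdsWithin_of_forall fun h hh =>
    firstStepCoeff_le hK_nonneg (hKi h hh) hc hh

end Kernel

theorem unbounded_iff_first_step_case2_general
    (K : ℝ → ℝ → ℝ) (G : ℝ → ℝ)
    (hK_nonneg : ∀ t s, 0 ≤ K t s)
    (hK_loc : ∀ t > (0 : ℝ), LocallyIntegrable (fun s => K t s) volume)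
    (hK_mono : StrictMonoOn (fun t => ∫ s in (0:ℝ)..t, K t s) (Ici 0))
    (hK_lim : ∀ a : ℝ, 0 ≤ a →
      Tendsto (fun t : ℝ => ∫ s in a..t, K t s) (nhdsWithin a (Ioi a)) (nhds 0))
    (hGcont : ContinuousOn G (Ici 0))
    (c₂ : ℝ) (hc₂ : c₂ ∈ Ioc (0:ℝ) 1) :
    (∀ M : ℝ, ∃ y > 0, M < G y / y) ↔
      ∃ H₀ > (0:ℝ), ∀ h : ℝ, 0 < h → h ≤ H₀ →
        ∃ Z > 0, Z = G (h * (∫ s in (0:ℝ)..c₂, K (c₂ * h) (s * h) * (s / c₂)) * Z) := by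
  have hK_pos : ∀ t > (0:ℝ), 0 < ∫ s in (0:ℝ)..t, K t s := fun t ht => by
    simpa using hK_mono self_mem_Ici ht.le ht
  exact unbounded_slope_iff_exists_pos_eq_comp_mul (hGcont.mono Ioi_subset_Ici_self)
    (tendsto_firstStepCoeff hK_nonneg hK_loc hK_pos (hK_lim 0 le_rfl) hc₂)

/-- **Proposition 5 (first step, case 2, no hypothesis on the kernel).** For a kernel `K`
and a nonlinearity `G` satisfying the general conditions and collocation parameters
`c₁ = 0 < c₂ ≤ 1`, the map `G y / y` is unbounded on `(0,∞)` if and only if there is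
`H₀ > 0` such that for every stepsize `h ∈ (0, H₀]` the first-step collocation equation
`Z = G (h · (∫₀^{c₂} K (c₂ h, s h) (s/c₂) ds) · Z)` has a positive solution, i.e. there
are nontrivial collocation solutions on `[0, t₁]` with `t₁ = h`. -/
theorem unbounded_iff_first_step_case2
    (K : ℝ → ℝ → ℝ) (G : ℝ → ℝ)
    (hK_nonneg : ∀ t s, 0 ≤ K t s)
    (hK_supp : ∀ t s, K t s ≠ 0 → 0 ≤ s ∧ s ≤ t)
    (hK_loc : ∀ t > (0 : ℝ), LocallyIntegrable (fun s => K t s) volume)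
    (hK_mono : StrictMonoOn (fun t => ∫ s in (0:ℝ)..t, K t s) (Ici 0))
    (hK_lim : ∀ a : ℝ, 0 ≤ a →
      Tendsto (fun t : ℝ => ∫ s in a..t, K t s) (nhdsWithin a (Ioi a)) (nhds 0))
    (hGcont : ContinuousOn G (Ici 0))
    (hGmono : StrictMonoOn G (Ici 0))
    (hGnonneg : ∀ y, 0 ≤ y → 0 ≤ G y)
    (hG0 : G 0 = 0)
    (c₂ : ℝ) (hc₂ : c₂ ∈ Ioc (0:ℝ) 1) :
    (∀ M : ℝ, ∃ y > 0, M < G y / y) ↔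
      ∃ H₀ > (0:ℝ), ∀ h : ℝ, 0 < h → h ≤ H₀ →
        ∃ Z > 0, Z = G (h * (∫ s in (0:ℝ)..c₂, K (c₂ * h) (s * h) * (s / c₂)) * Z) :=
  unbounded_iff_first_step_case2_general K G hK_nonneg hK_loc hK_mono hK_lim hGcont c₂ hc₂
end

section
/- Let G : [0,∞) → [0,∞) be continuous, strictly increasing, with G(0) = 0. Suppose G(y)/y is unbounded near zero (for every δ > 0, sup_{0<y<δ} G(y)/y = +∞) and y/G(y) is unbounded away from zero (for every t > 0, sup_{y>t} y/G(y) = +∞). Then for every α ≥ 0 and every β > 0 there exists y > 0 with G(α + βy) = y. -/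
open Set

/-!
Write `F y = G (α + β y)`. Since `G y / y` is unbounded near zero, some `z > 0` has
`β G z > z`, and then `a = z / β` satisfies `F a ≥ G z > a`. Since `y / G y` is unbounded away
from zero, some `w ≥ 2α` has `0 < 2β G w < w`, and then `b = (w - α) / β ≥ w / (2β)` satisfies
`F b = G w < b`. The intermediate value theorem gives a fixed point of `F` between `a` and `b`.
-/

lemma exists_pos_lt_apply_add_mul {G : ℝ → ℝ} (hG : MonotoneOn G (Ici 0))
    (hnear : ∀ M : ℝ, ∃ y, 0 < y ∧ M < G y / y) {α β : ℝ} (hα : 0 ≤ α) (hβ : 0 < β) :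
    ∃ a > 0, a < G (α + β * a) := by
  obtain ⟨z, hz, hzG⟩ := hnear (1 / β)
  have hβz : z / β < G z := by
    rw [div_lt_div_iff₀ hβ hz] at hzG
    rw [div_lt_iff₀ hβ]
    linarith
  refine ⟨z / β, div_pos hz hβ, hβz.trans_le ?_⟩
  rw [mul_div_cancel₀ z hβ.ne']
  exact hG hz.le (by simp only [mem_Ici]; positivity) (le_add_of_nonneg_left hα)

lemma exists_pos_apply_add_mul_lt {G : ℝ → ℝ}
    (haway : ∀ t > (0 : ℝ), ∀ M : ℝ, ∃ y > t, M < y / G y) (α : ℝ) {β : ℝ} (hβ : 0 < β) :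
    ∃ b > 0, G (α + β * b) < b := by
  obtain ⟨w, hw, hwG⟩ := haway (max (2 * α) 1) (by positivity) (2 * β)
  have hw2α : 2 * α < w := (le_max_left _ _).trans_lt hw
  have hw0 : 0 < w := zero_lt_one.trans ((le_max_right _ _).trans_lt hw)
  have hGw : 0 < G w := (div_pos_iff_of_pos_left hw0).mp ((by positivity : 0 < 2 * β).trans hwG)
  have hGw_lt : G w < w / (2 * β) := by
    rw [lt_div_iff₀ hGw] at hwG
    rw [lt_div_iff₀ (by positivity)]
    linarith
  refine ⟨(w - α) / β, div_pos (by linarith) hβ, ?_⟩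
  rw [mul_div_cancel₀ _ hβ.ne', add_sub_cancel]
  calc G w < w / (2 * β) := hGw_lt
    _ ≤ (w - α) / β := by
      rw [div_le_div_iff₀ (by positivity) hβ]
      nlinarith

theorem fixed_point_of_unbounded_near_zero_and_away_general
    (G : ℝ → ℝ)
    (hGcont : ContinuousOn G (Ici 0))
    (hGmono : StrictMonoOn G (Ici 0))
    (hG_near : ∀ δ > (0:ℝ), ∀ M : ℝ, ∃ y : ℝ, 0 < y ∧ y < δ ∧ M < G y / y)
    (hG_away : ∀ t > (0:ℝ), ∀ M : ℝ, ∃ y > t, M < y / G y) :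
    ∀ α : ℝ, 0 ≤ α → ∀ β : ℝ, 0 < β → ∃ y > 0, G (α + β * y) = y := by
  intro α hα β hβ
  have hnear (M : ℝ) : ∃ y, 0 < y ∧ M < G y / y :=
    let ⟨y, hy, _, hyM⟩ := hG_near 1 one_pos M
    ⟨y, hy, hyM⟩
  obtain ⟨a, ha, hGa⟩ := exists_pos_lt_apply_add_mul hGmono.monotoneOn hnear hα hβ
  obtain ⟨b, hb, hGb⟩ := exists_pos_apply_add_mul_lt hG_away α hβ
  have hcont : ContinuousOn (fun y => G (α + β * y)) (Ici 0) :=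
    hGcont.comp (by fun_prop) fun y (hy : 0 ≤ y) => by simp only [mem_Ici]; positivity
  have hab : uIcc a b ⊆ Ici 0 := fun y hy => le_trans (le_min ha.le hb.le) hy.1
  obtain ⟨c, hc, hfix⟩ := exists_mem_uIcc_isFixedPt (hcont.mono hab) hGa.le hGb.le
  exact ⟨c, (lt_min ha hb).trans_le hc.1, hfix⟩

/-- If `G` satisfies the general conditions, `G y / y` is unbounded near zero, and
`y / G y` is unbounded away from zero, then for all `α ≥ 0` and `β > 0` the map
`y ↦ G (α + β y)` has a positive fixed point (this underlies unconditional existence). -/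
theorem fixed_point_of_unbounded_near_zero_and_away
    (G : ℝ → ℝ)
    (hGcont : ContinuousOn G (Ici 0))
    (hGmono : StrictMonoOn G (Ici 0))
    (hGnonneg : ∀ y, 0 ≤ y → 0 ≤ G y)
    (hG0 : G 0 = 0)
    (hG_near : ∀ δ > (0:ℝ), ∀ M : ℝ, ∃ y : ℝ, 0 < y ∧ y < δ ∧ M < G y / y)
    (hG_away : ∀ t > (0:ℝ), ∀ M : ℝ, ∃ y > t, M < y / G y) :
    ∀ α : ℝ, 0 ≤ α → ∀ β : ℝ, 0 < β → ∃ y > 0, G (α + β * y) = y :=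
  fixed_point_of_unbounded_near_zero_and_away_general G hGcont hGmono hG_near hG_away
end

section
/- Let K be a kernel and G a nonlinearity satisfying the general conditions, and fix c₁ ∈ (0,1] (case 1 collocation). Suppose G(y)/y is unbounded near zero (for every δ > 0, sup_{0<y<δ} G(y)/y = +∞) and y/G(y) is unbounded away from zero (for every t > 0, sup_{y>t} y/G(y) = +∞). Then there is unconditional existence: for every mesh 0 = t₀ < t₁ < ... < t_N there exists a nontrivial collocation solution on [0,t_N]. -/
/-!
Since the collocation point `t_{n,1}` lies in `(t_n, t_{n+1}]`, the `n`-th collocation equation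
reads `Z_n = G (A_n + κ_n Z_n)`, where `A_n ≥ 0` depends only on `Z_0, …, Z_{n-1}` and
`κ_n = ∫_{t_n}^{t_{n,1}} K(t_{n,1}, s) ds ≥ 0`; so the system can be solved one unknown at a time.
In terms of `y = A + κ x` the scalar equation `x = G (A + κ x)` becomes `y = A + κ G y`, and
`A + κ G y - y` changes sign on `[A, ∞)`: it is `≥ 0` at `y = A` and negative at the large `y`
where `y / G y > 2κ`. For `n = 0` we have `A_0 = 0` and `κ_0 = 𝒦(t_{0,1}) > 0`, and the small
`y` where `G y / y > 1/κ_0` make the sign change happen inside `(0, ∞)`, which gives `Z_0 > 0`.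
-/

open Set MeasureTheory Filter

/-- The piecewise constant collocation solution determined by a mesh `t` and
coefficients `Z` (case 1: `m = 1`). -/
noncomputable def pieceConst (t : ℕ → ℝ) (Z : ℕ → ℝ) (N : ℕ) : ℝ → ℝ :=
  fun s => ∑ m ∈ Finset.range N, Set.indicator (Set.Ioc (t m) (t (m + 1))) (fun _ => Z m) s

/-- The case 1 collocation equations (`m = 1`, collocation parameter `c₁`). -/
def IsCase1Sol (K : ℝ → ℝ → ℝ) (G : ℝ → ℝ) (c₁ : ℝ) (N : ℕ) (t : ℕ → ℝ) (Z : ℕ → ℝ) :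
    Prop :=
  ∀ n < N, Z n = G (∫ s in (0:ℝ)..(t n + c₁ * (t (n + 1) - t n)),
    K (t n + c₁ * (t (n + 1) - t n)) s * pieceConst t Z N s)

section FixedPoint

variable {G : ℝ → ℝ}

lemma exists_mem_Icc_eq_add_mul_apply (hGcont : ContinuousOn G (Ici 0)) {A κ a b : ℝ}
    (ha : 0 ≤ a) (hab : a ≤ b) (hGa : a ≤ A + κ * G a) (hGb : A + κ * G b ≤ b) :
    ∃ y ∈ Icc a b, y = A + κ * G y := by
  have hcont : ContinuousOn (fun y => y - (A + κ * G y)) (Icc a b) :=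
    continuousOn_id.sub (continuousOn_const.add
      (continuousOn_const.mul (hGcont.mono fun y hy => le_trans ha hy.1)))
  obtain ⟨y, hy, hy0⟩ := intermediate_value_Icc hab hcont
    (show (0 : ℝ) ∈ Icc _ _ from ⟨by linarith, by linarith⟩)
  exact ⟨y, hy, sub_eq_zero.mp hy0⟩

lemma exists_lt_add_mul_apply_lt (hG_away : ∀ t > (0:ℝ), ∀ M : ℝ, ∃ y > t, M < y / G y)
    {A κ : ℝ} (hA : 0 ≤ A) (hκ : 0 ≤ κ) : ∃ y, A < y ∧ A + κ * G y < y := by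
  obtain ⟨y, hy, hyG⟩ := hG_away (2 * A + 1) (by linarith) (2 * κ)
  have hGy : 0 < G y := by
    by_contra! h
    linarith [div_nonpos_of_nonneg_of_nonpos (by linarith : 0 ≤ y) h]
  have : 2 * κ * G y < y := (lt_div_iff₀ hGy).mp hyG
  exact ⟨y, by linarith, by linarith⟩

lemma exists_lt_mul_apply (hG_near : ∀ δ > (0:ℝ), ∀ M : ℝ, ∃ y : ℝ, 0 < y ∧ y < δ ∧ M < G y / y)
    {κ δ : ℝ} (hκ : 0 < κ) (hδ : 0 < δ) : ∃ y, 0 < y ∧ y < δ ∧ y < κ * G y := by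
  obtain ⟨y, hy, hyδ, hyG⟩ := hG_near δ hδ κ⁻¹
  refine ⟨y, hy, hyδ, ?_⟩
  rw [lt_div_iff₀ hy, inv_mul_eq_div, div_lt_iff₀' hκ] at hyG
  exact hyG

lemma exists_nonneg_eq_apply_add_mul (hGcont : ContinuousOn G (Ici 0))
    (hGnonneg : ∀ y, 0 ≤ y → 0 ≤ G y) (hG_away : ∀ t > (0:ℝ), ∀ M : ℝ, ∃ y > t, M < y / G y)
    {A κ : ℝ} (hA : 0 ≤ A) (hκ : 0 ≤ κ) : ∃ x, 0 ≤ x ∧ x = G (A + κ * x) := by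
  obtain ⟨b, hAb, hb⟩ := exists_lt_add_mul_apply_lt hG_away hA hκ
  obtain ⟨y, hy, hy_eq⟩ := exists_mem_Icc_eq_add_mul_apply hGcont hA hAb.le
    (le_add_of_nonneg_right (mul_nonneg hκ (hGnonneg A hA))) hb.le
  exact ⟨G y, hGnonneg y (hA.trans hy.1), by rw [← hy_eq]⟩

lemma exists_pos_eq_apply_mul (hGcont : ContinuousOn G (Ici 0))
    (hG_near : ∀ δ > (0:ℝ), ∀ M : ℝ, ∃ y : ℝ, 0 < y ∧ y < δ ∧ M < G y / y)
    (hG_away : ∀ t > (0:ℝ), ∀ M : ℝ, ∃ y > t, M < y / G y)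
    {κ : ℝ} (hκ : 0 < κ) : ∃ x, 0 < x ∧ x = G (κ * x) := by
  obtain ⟨b, hb, hGb⟩ := exists_lt_add_mul_apply_lt hG_away le_rfl hκ.le
  obtain ⟨a, ha, hab, hGa⟩ := exists_lt_mul_apply hG_near hκ hb
  obtain ⟨y, hy, hy_eq⟩ := exists_mem_Icc_eq_add_mul_apply hGcont ha.le hab.le
    (by rw [zero_add]; exact hGa.le) hGb.le
  rw [zero_add] at hy_eq
  exact ⟨G y, pos_of_mul_pos_right (hy_eq ▸ ha.trans_le hy.1) hκ.le, by rw [← hy_eq]⟩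

end FixedPoint

lemma exists_solution_of_lowerTriangular {G : ℝ → ℝ}
    (hstep : ∀ A ≥ (0:ℝ), ∀ κ ≥ (0:ℝ), ∃ x, 0 ≤ x ∧ x = G (A + κ * x))
    (a : ℕ → ℕ → ℝ) (κ : ℕ → ℝ) (ha : ∀ n m, 0 ≤ a n m) (hκ : ∀ n, 0 ≤ κ n)
    {x₀ : ℝ} (hx₀ : 0 ≤ x₀) (hx₀_eq : x₀ = G (κ 0 * x₀)) (N : ℕ) :
    ∃ Z : ℕ → ℝ, (∀ m, 0 ≤ Z m) ∧ Z 0 = x₀ ∧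
      ∀ n ≤ N, Z n = G (∑ m ∈ Finset.range n, a n m * Z m + κ n * Z n) := by
  induction N with
  | zero =>
    refine ⟨fun _ => x₀, fun _ => hx₀, rfl, fun n hn => ?_⟩
    obtain rfl := Nat.le_zero.mp hn
    simpa using hx₀_eq
  | succ N ih =>
    obtain ⟨Z, hZ, hZ0, hZeq⟩ := ih
    obtain ⟨x, hx, hx_eq⟩ := hstep (∑ m ∈ Finset.range (N + 1), a (N + 1) m * Z m)
      (Finset.sum_nonneg fun m _ => mul_nonneg (ha _ m) (hZ m)) (κ (N + 1)) (hκ _)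
    have hsum : ∀ n ≤ N + 1, ∑ m ∈ Finset.range n, a n m * Function.update Z (N + 1) x m
        = ∑ m ∈ Finset.range n, a n m * Z m := fun n hn =>
      Finset.sum_congr rfl fun m hm => by
        rw [Function.update_of_ne (by simp only [Finset.mem_range] at hm; omega)]
    refine ⟨Function.update Z (N + 1) x, ?_, by simpa using hZ0, fun n hn => ?_⟩
    · intro m
      rcases eq_or_ne m (N + 1) with rfl | h
      · simpa using hx
      · simpa [h] using hZ m
    rw [hsum n hn]
    rcases (Nat.le_succ_iff.mp hn) with hn | rfl
    · rw [Function.update_of_ne (by omega)]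
      exact hZeq n hn
    · simpa using hx_eq

lemma setIntegral_mul_pieceConst {S : Set ℝ} {f : ℝ → ℝ}
    (hf : IntegrableOn f S) (t Z : ℕ → ℝ) (N : ℕ) :
    ∫ s in S, f s * pieceConst t Z N s
      = ∑ m ∈ Finset.range N, (∫ s in S ∩ Ioc (t m) (t (m + 1)), f s) * Z m := by
  have hind : ∀ m s, f s * (Ioc (t m) (t (m + 1))).indicator (fun _ => Z m) s
      = (Ioc (t m) (t (m + 1))).indicator (fun s => f s * Z m) s := fun m s => by
    by_cases h : s ∈ Ioc (t m) (t (m + 1)) <;> simp [indicator, h]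
  simp only [pieceConst, Finset.mul_sum, hind]
  rw [integral_finsetSum _ fun m _ => (hf.mul_const (Z m)).indicator measurableSet_Ioc]
  refine Finset.sum_congr rfl fun m _ => ?_
  rw [setIntegral_indicator measurableSet_Ioc, integral_mul_const]

lemma integral_mul_pieceConst_of_mem_Icc {t : ℕ → ℝ} {N n : ℕ} (ht : MonotoneOn t (Iic N))
    (ht0 : 0 ≤ t 0) (hn : n < N) {τ : ℝ} (hτ : τ ∈ Icc (t n) (t (n + 1))) {f : ℝ → ℝ}
    (hf : IntegrableOn f (Ioc 0 τ)) (Z : ℕ → ℝ) :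
    ∫ s in (0:ℝ)..τ, f s * pieceConst t Z N s
      = ∑ m ∈ Finset.range n, (∫ s in Ioc (t m) (t (m + 1)), f s) * Z m
        + (∫ s in Ioc (t n) τ, f s) * Z n := by
  have htle : ∀ i j, i ≤ j → j ≤ N → t i ≤ t j := fun i j hij hj =>
    ht (mem_Iic.mpr (hij.trans hj)) (mem_Iic.mpr hj) hij
  have hnonneg : ∀ m ≤ N, 0 ≤ t m := fun m hm => ht0.trans (htle 0 m m.zero_le hm)
  have hτ0 : 0 ≤ τ := (hnonneg n hn.le).trans hτ.1
  have hlate : ∀ m ∈ Finset.range N, m ∉ Finset.range (n + 1) →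
      (∫ s in Ioc 0 τ ∩ Ioc (t m) (t (m + 1)), f s) * Z m = 0 := fun m hmN hm => by
    simp only [Finset.mem_range, not_lt] at hmN hm
    have hτm : τ ≤ t m := hτ.2.trans (htle _ _ hm hmN.le)
    rw [Ioc_inter_Ioc, Ioc_eq_empty (by simp [hτm]), setIntegral_empty, zero_mul]
  rw [intervalIntegral.integral_of_le hτ0, setIntegral_mul_pieceConst hf,
    ← Finset.sum_subset (Finset.range_subset_range.mpr hn) hlate, Finset.sum_range_succ,
    Ioc_inter_Ioc, max_eq_right (hnonneg n hn.le), min_eq_left hτ.2]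
  congr 1
  refine Finset.sum_congr rfl fun m hm => ?_
  have hm : m < n := Finset.mem_range.mp hm
  rw [Ioc_inter_Ioc, max_eq_right (hnonneg m (by omega)),
    min_eq_right ((htle (m + 1) n hm hn.le).trans hτ.1)]

theorem unconditional_existence_case1_general
    (K : ℝ → ℝ → ℝ) (G : ℝ → ℝ)
    (hK_nonneg : ∀ t s, 0 ≤ K t s)
    (hK_loc : ∀ t > (0 : ℝ), LocallyIntegrable (fun s => K t s) volume)
    (hK_mono : StrictMonoOn (fun t => ∫ s in (0:ℝ)..t, K t s) (Ici 0))
    (hGcont : ContinuousOn G (Ici 0))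
    (hGnonneg : ∀ y, 0 ≤ y → 0 ≤ G y)
    (hG_near : ∀ δ > (0:ℝ), ∀ M : ℝ, ∃ y : ℝ, 0 < y ∧ y < δ ∧ M < G y / y)
    (hG_away : ∀ t > (0:ℝ), ∀ M : ℝ, ∃ y > t, M < y / G y)
    (c₁ : ℝ) (hc₁ : c₁ ∈ Ioc (0:ℝ) 1) :
    ∀ N : ℕ, 1 ≤ N → ∀ t : ℕ → ℝ, t 0 = 0 → (∀ n < N, t n < t (n + 1)) →
      ∃ Z : ℕ → ℝ, IsCase1Sol K G c₁ N t Z ∧ 0 < Z 0 := by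
  intro N hN t ht0 hmesh
  set τ : ℕ → ℝ := fun n => t n + c₁ * (t (n + 1) - t n)
  have hτ : ∀ n < N, τ n ∈ Ioc (t n) (t (n + 1)) := fun n hn => by
    have := hmesh n hn
    constructor <;> nlinarith [hc₁.1, hc₁.2]
  have ht : MonotoneOn t (Iic N) := (strictMonoOn_Iic_of_lt_succ hmesh).monotoneOn
  have hτpos : ∀ n < N, 0 < τ n := fun n hn =>
    (ht0 ▸ ht (mem_Iic.mpr N.zero_le) (mem_Iic.mpr hn.le) n.zero_le).trans_lt (hτ n hn).1
  have hKint : ∀ n < N, IntegrableOn (K (τ n)) (Ioc 0 (τ n)) := fun n hn =>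
    ((hK_loc _ (hτpos n hn)).integrableOn_isCompact isCompact_Icc).mono_set Ioc_subset_Icc_self
  have hκ0 : 0 < ∫ s in Ioc (t 0) (τ 0), K (τ 0) s := by
    have := hK_mono self_mem_Ici (hτpos 0 hN).le (hτpos 0 hN)
    simpa [intervalIntegral.integral_of_le, ht0, (hτpos 0 hN).le] using this
  obtain ⟨x₀, hx₀, hx₀_eq⟩ := exists_pos_eq_apply_mul hGcont hG_near hG_away hκ0
  obtain ⟨Z, -, hZ0, hZ⟩ := exists_solution_of_lowerTriangular
    (fun A hA κ hκ => exists_nonneg_eq_apply_add_mul hGcont hGnonneg hG_away hA hκ)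
    (fun n m => ∫ s in Ioc (t m) (t (m + 1)), K (τ n) s)
    (fun n => ∫ s in Ioc (t n) (τ n), K (τ n) s)
    (fun _ _ => setIntegral_nonneg measurableSet_Ioc fun _ _ => hK_nonneg _ _)
    (fun _ => setIntegral_nonneg measurableSet_Ioc fun _ _ => hK_nonneg _ _) hx₀.le hx₀_eq N
  refine ⟨Z, fun n hn => ?_, hZ0 ▸ hx₀⟩
  exact (hZ n hn.le).trans (congrArg G (integral_mul_pieceConst_of_mem_Icc ht ht0.ge hn
    (Ioc_subset_Icc_self (hτ n hn)) (hKint n hn) Z).symm)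

/-- **Unconditional existence (case 1).** If `K` and `G` satisfy the general conditions,
`c₁ ∈ (0,1]`, `G y / y` is unbounded near zero and `y / G y` is unbounded away from zero,
then for every mesh `0 = t₀ < t₁ < … < t_N` there is a nontrivial collocation solution on
`[0, t_N]`. -/
theorem unconditional_existence_case1
    (K : ℝ → ℝ → ℝ) (G : ℝ → ℝ)
    (hK_nonneg : ∀ t s, 0 ≤ K t s)
    (hK_supp : ∀ t s, K t s ≠ 0 → 0 ≤ s ∧ s ≤ t)
    (hK_loc : ∀ t > (0 : ℝ), LocallyIntegrable (fun s => K t s) volume)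
    (hK_mono : StrictMonoOn (fun t => ∫ s in (0:ℝ)..t, K t s) (Ici 0))
    (hK_lim : ∀ a : ℝ, 0 ≤ a →
      Tendsto (fun t : ℝ => ∫ s in a..t, K t s) (nhdsWithin a (Ioi a)) (nhds 0))
    (hGcont : ContinuousOn G (Ici 0))
    (hGmono : StrictMonoOn G (Ici 0))
    (hGnonneg : ∀ y, 0 ≤ y → 0 ≤ G y)
    (hG0 : G 0 = 0)
    (hG_near : ∀ δ > (0:ℝ), ∀ M : ℝ, ∃ y : ℝ, 0 < y ∧ y < δ ∧ M < G y / y)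
    (hG_away : ∀ t > (0:ℝ), ∀ M : ℝ, ∃ y > t, M < y / G y)
    (c₁ : ℝ) (hc₁ : c₁ ∈ Ioc (0:ℝ) 1) :
    ∀ N : ℕ, 1 ≤ N → ∀ t : ℕ → ℝ, t 0 = 0 → (∀ n < N, t n < t (n + 1)) →
      ∃ Z : ℕ → ℝ, IsCase1Sol K G c₁ N t Z ∧ 0 < Z 0 :=
  unconditional_existence_case1_general K G hK_nonneg hK_loc hK_mono hGcont hGnonneg hG_near hG_away
    c₁ hc₁
end

section
/- Let G : [0,∞) → [0,∞) be continuous, strictly increasing, with G(0) = 0. Suppose G(y)/y is unbounded near zero (for every δ > 0, sup_{0<y<δ} G(y)/y = +∞) and G(y)/y is bounded away from zero, i.e. there exist M > 0 and τ > 0 with G(y) ≤ M·y for all y > τ. Then for every β with 0 < β < 1/M and every α ≥ 0 there exists y > 0 with G(α + βy) = y. -/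
/-!
The map `y ↦ G (α + β y)` is continuous on `[0, ∞)`. Near zero it lies above the diagonal:
pick `z` with `G z / z > 1 / β`; then at `a = z / β` monotonicity gives
`G (α + β a) ≥ G z > a`. For large `y` it lies below the diagonal, since there
`G (α + β y) ≤ M α + M β y` and `M β < 1`. The intermediate value theorem gives a fixed point
between the two.
-/

open Set Filter

lemma exists_lt_comp_add_mul {G : ℝ → ℝ} (hGmono : MonotoneOn G (Ici 0))
    (hG_unbdd : ∀ K : ℝ, ∃ y > 0, K < G y / y)
    {α β : ℝ} (hα : 0 ≤ α) (hβ : 0 < β) : ∃ a > 0, a < G (α + β * a) := by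
  obtain ⟨z, hz, hzG⟩ := hG_unbdd (1 / β)
  refine ⟨z / β, by positivity, ?_⟩
  calc z / β < G z := by rwa [lt_div_iff₀ hz, one_div_mul_eq_div] at hzG
    _ ≤ G (α + β * (z / β)) := by
      rw [mul_div_cancel₀ z hβ.ne']
      exact hGmono hz.le (by simp only [mem_Ici]; linarith) (by linarith)

lemma eventually_comp_add_mul_lt {G : ℝ → ℝ} {M : ℝ} (hG_bdd : ∀ᶠ y in atTop, G y ≤ M * y)
    {α β : ℝ} (hβ : 0 < β) (hMβ : M * β < 1) : ∀ᶠ b in atTop, G (α + β * b) < b := by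
  have h_affine : Tendsto (fun b => α + β * b) atTop atTop :=
    tendsto_atTop_add_const_left _ _ (tendsto_id.const_mul_atTop hβ)
  have h_gap : Tendsto (fun b => (1 - M * β) * b - M * α) atTop atTop :=
    tendsto_atTop_add_const_right _ _ (tendsto_id.const_mul_atTop (by linarith))
  filter_upwards [h_affine.eventually hG_bdd, h_gap.eventually_gt_atTop 0] with b hb hgap
  linarith

theorem fixed_point_of_bounded_away_general
    (G : ℝ → ℝ)
    (hGcont : ContinuousOn G (Ici 0))
    (hGmono : StrictMonoOn G (Ici 0))
    (hG_near : ∀ δ > (0:ℝ), ∀ M : ℝ, ∃ y : ℝ, 0 < y ∧ y < δ ∧ M < G y / y)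
    (M τ : ℝ) (hM : 0 < M)
    (hG_bdd : ∀ y : ℝ, τ < y → G y ≤ M * y) :
    ∀ β : ℝ, 0 < β → β < 1 / M → ∀ α : ℝ, 0 ≤ α → ∃ y > 0, G (α + β * y) = y := by
  intro β hβ hβM α hα
  have hMβ : M * β < 1 := (lt_div_iff₀' hM).mp hβM
  obtain ⟨a, ha, ha_lt⟩ := exists_lt_comp_add_mul hGmono.monotoneOn
    (fun K => (hG_near 1 one_pos K).imp fun _ hy => ⟨hy.1, hy.2.2⟩) hα hβ
  obtain ⟨b, hb_lt, hab⟩ := ((eventually_comp_add_mul_lt (α := α)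
    ((eventually_gt_atTop τ).mono hG_bdd) hβ hMβ).and (eventually_gt_atTop a)).exists
  have hcont : ContinuousOn (fun y => G (α + β * y)) (Icc a b) :=
    hGcont.comp (by fun_prop) fun y hy => by
      simp only [mem_Ici]; nlinarith [ha.trans_le hy.1]
  obtain ⟨y, hy, hfix⟩ := exists_mem_Icc_isFixedPt hcont hab.le ha_lt.le hb_lt.le
  exact ⟨y, ha.trans_le hy.1, hfix⟩

/-- If `G` satisfies the general conditions, `G y / y` is unbounded near zero, and
`G y / y` is bounded away from zero (there are `M, τ > 0` with `G y ≤ M y` for `y > τ`),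
then for every `β` with `0 < β < 1/M` and every `α ≥ 0` the map `y ↦ G (α + β y)` has a
positive fixed point (this underlies existence for fine meshes). -/
theorem fixed_point_of_bounded_away
    (G : ℝ → ℝ)
    (hGcont : ContinuousOn G (Ici 0))
    (hGmono : StrictMonoOn G (Ici 0))
    (hGnonneg : ∀ y, 0 ≤ y → 0 ≤ G y)
    (hG0 : G 0 = 0)
    (hG_near : ∀ δ > (0:ℝ), ∀ M : ℝ, ∃ y : ℝ, 0 < y ∧ y < δ ∧ M < G y / y)
    (M τ : ℝ) (hM : 0 < M) (hτ : 0 < τ)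
    (hG_bdd : ∀ y : ℝ, τ < y → G y ≤ M * y) :
    ∀ β : ℝ, 0 < β → β < 1 / M → ∀ α : ℝ, 0 ≤ α → ∃ y > 0, G (α + β * y) = y :=
  fixed_point_of_bounded_away_general G hGcont hGmono hG_near M τ hM hG_bdd
end

section
/- Let G : [0,∞) → [0,∞) be continuous, strictly increasing, with G(0) = 0, and suppose y ↦ G(y)/y is strictly decreasing on (0,∞). Then for every α ≥ 0 and every β > 0 there is at most one y > 0 with G(α + βy) = y. -/
open Set

/-! At a positive fixed point `y = G (α + β y)`, the ratio `G x / x` at `x = α + β y` equals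
`y / (α + β y)`, which is nondecreasing in `y` because `α ≥ 0`. Two distinct fixed points would
thus give two points `x₁ < x₂` with `G x₁ / x₁ ≤ G x₂ / x₂`, against strict decrease. -/

theorem Set.Subsingleton.of_strictAntiOn_of_monotoneOn_comp {α β γ : Type*} [LinearOrder α]
    [Preorder β] [Preorder γ] {f : β → γ} {g : α → β} {s : Set β} {t : Set α}
    (hf : StrictAntiOn f s) (hg : StrictMonoOn g t) (hgts : MapsTo g t s)
    (hfg : MonotoneOn (f ∘ g) t) : t.Subsingleton := by
  have hno_lt : ∀ a ∈ t, ∀ b ∈ t, ¬a < b := fun a ha b hb hab =>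
    (hf (hgts ha) (hgts hb) (hg ha hb hab)).not_ge (hfg ha hb hab.le)
  intro a ha b hb
  by_contra hne
  rcases lt_or_gt_of_ne hne with hab | hba
  exacts [hno_lt a ha b hb hab, hno_lt b hb a ha hba]

theorem monotoneOn_div_add_mul_self {α β : ℝ} (hα : 0 ≤ α) (hβ : 0 < β) :
    MonotoneOn (fun y => y / (α + β * y)) (Ioi 0) := by
  intro y₁ (hy₁ : 0 < y₁) y₂ (hy₂ : 0 < y₂) hy
  rw [div_le_div_iff₀ (by positivity) (by positivity)]
  nlinarith [mul_le_mul_of_nonneg_left hy hα]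

theorem fixed_point_unique_of_strict_anti_general
    (G : ℝ → ℝ)
    (hG_anti : StrictAntiOn (fun y => G y / y) (Ioi 0)) :
    ∀ α : ℝ, 0 ≤ α → ∀ β : ℝ, 0 < β →
      ∀ y₁ y₂ : ℝ, 0 < y₁ → 0 < y₂ →
        G (α + β * y₁) = y₁ → G (α + β * y₂) = y₂ → y₁ = y₂ := by
  intro α hα β hβ y₁ y₂ hy₁ hy₂ h₁ h₂
  set fixedPoints := {y : ℝ | 0 < y ∧ G (α + β * y) = y}
  have hpos : MapsTo (fun y => α + β * y) fixedPoints (Ioi 0) :=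
    fun _ hy => add_pos_of_nonneg_of_pos hα (mul_pos hβ hy.1)
  have hratio : MonotoneOn ((fun y => G y / y) ∘ fun y => α + β * y) fixedPoints := by
    intro a ha b hb hab
    simpa only [Function.comp_apply, ha.2, hb.2] using
      monotoneOn_div_add_mul_self hα hβ ha.1 hb.1 hab
  exact Set.Subsingleton.of_strictAntiOn_of_monotoneOn_comp hG_anti
    (fun a _ b _ hab => show α + β * a < α + β * b by gcongr) hpos hratio ⟨hy₁, h₁⟩ ⟨hy₂, h₂⟩

/-- If `G` satisfies the general conditions and `y ↦ G y / y` is strictly decreasing on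
`(0,∞)`, then for every `α ≥ 0` and `β > 0` the map `y ↦ G (α + β y)` has at most one
positive fixed point (this underlies uniqueness of nontrivial collocation solutions). -/
theorem fixed_point_unique_of_strict_anti
    (G : ℝ → ℝ)
    (hGcont : ContinuousOn G (Ici 0))
    (hGmono : StrictMonoOn G (Ici 0))
    (hGnonneg : ∀ y, 0 ≤ y → 0 ≤ G y)
    (hG0 : G 0 = 0)
    (hG_anti : StrictAntiOn (fun y => G y / y) (Ioi 0)) :
    ∀ α : ℝ, 0 ≤ α → ∀ β : ℝ, 0 < β →
      ∀ y₁ y₂ : ℝ, 0 < y₁ → 0 < y₂ →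
        G (α + β * y₁) = y₁ → G (α + β * y₂) = y₂ → y₁ = y₂ :=
  fixed_point_unique_of_strict_anti_general G hG_anti
end

section
/- Let G : [0,∞) → [0,∞) be continuous, strictly increasing, with G(0) = 0, and let α > 0 and δ > 0. If ∫_δ^{+∞} (s/G(s))^{1/α} ds/s < +∞, then y/G(y) is bounded away from zero: there exist τ > 0 and C > 0 such that y ≤ C·G(y) for all y > τ. -/
/-! On each dyadic block `(y, 2y]` the integrand `(s / G s)^{1/α} / s` is at least
`(y / G (2y))^{1/α} / (2y)`, because `G` is increasing. The block has length `y`, so the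
convergent integral `I` bounds `(y / G (2y))^{1/α} / 2` uniformly in `y ≥ δ`, which gives
`y ≤ 2 (2I + 1)^α G (2y)`. -/

open Set MeasureTheory

lemma StrictMonoOn.pos_of_map_zero {G : ℝ → ℝ} (hG : StrictMonoOn G (Ici 0)) (hG0 : G 0 = 0)
    {s : ℝ} (hs : 0 < s) : 0 < G s :=
  hG0 ▸ hG self_mem_Ici hs.le hs

lemma mul_sub_le_setIntegral_Ioi {f : ℝ → ℝ} {δ a b c : ℝ}
    (hf : IntegrableOn f (Ioi δ)) (hf0 : ∀ s ∈ Ioi δ, 0 ≤ f s)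
    (hδa : δ ≤ a) (hab : a ≤ b) (hc : ∀ s ∈ Ioc a b, c ≤ f s) :
    c * (b - a) ≤ ∫ s in Ioi δ, f s := by
  have hsub : Ioc a b ⊆ Ioi δ := fun s hs => hδa.trans_lt hs.1
  calc c * (b - a) = ∫ _ in Ioc a b, c := by
        rw [setIntegral_const, Real.volume_real_Ioc_of_le hab, smul_eq_mul, mul_comm]
    _ ≤ ∫ s in Ioc a b, f s :=
        setIntegral_mono_on (integrableOn_const measure_Ioc_lt_top.ne) (hf.mono_set hsub)
          measurableSet_Ioc hc
    _ ≤ ∫ s in Ioi δ, f s :=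
        setIntegral_mono_set hf ((ae_restrict_iff' measurableSet_Ioi).2 (ae_of_all _ hf0))
          hsub.eventuallyLE

section Mydlarczyk

variable {G : ℝ → ℝ} {p : ℝ}

lemma StrictMonoOn.rpow_div_map_div_nonneg (hG : StrictMonoOn G (Ici 0)) (hG0 : G 0 = 0)
    {s : ℝ} (hs : 0 < s) : 0 ≤ (s / G s) ^ p / s :=
  div_nonneg (Real.rpow_nonneg (div_nonneg hs.le (hG.pos_of_map_zero hG0 hs).le) _) hs.le

lemma rpow_div_map_div_le_of_le {y s z : ℝ} (hp : 0 ≤ p) (hy : 0 < y) (hys : y ≤ s)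
    (hsz : s ≤ z) (hGs : 0 < G s) (hGsz : G s ≤ G z) :
    (y / G z) ^ p / z ≤ (s / G s) ^ p / s := by
  have hs : 0 < s := hy.trans_le hys
  have hbase : y / G z ≤ s / G s := div_le_div₀ hs.le hys hGs hGsz
  have hpow : (y / G z) ^ p ≤ (s / G s) ^ p :=
    Real.rpow_le_rpow (div_nonneg hy.le (hGs.trans_le hGsz).le) hbase hp
  exact div_le_div₀ (Real.rpow_nonneg (div_nonneg hs.le hGs.le) _) hpow hs hsz

lemma rpow_div_map_two_mul_le_two_mul_integral (hG : StrictMonoOn G (Ici 0)) (hG0 : G 0 = 0)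
    (hp : 0 ≤ p) {δ y : ℝ} (hδ : 0 < δ)
    (hint : IntegrableOn (fun s => (s / G s) ^ p / s) (Ioi δ)) (hy : δ ≤ y) :
    (y / G (2 * y)) ^ p ≤ 2 * ∫ s in Ioi δ, (s / G s) ^ p / s := by
  have hy0 : 0 < y := hδ.trans_le hy
  have hnonneg : ∀ s ∈ Ioi δ, 0 ≤ (s / G s) ^ p / s := fun s hs =>
    hG.rpow_div_map_div_nonneg hG0 (hδ.trans hs)
  have hblock : ∀ s ∈ Ioc y (2 * y), (y / G (2 * y)) ^ p / (2 * y) ≤ (s / G s) ^ p / s :=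
    fun s hs =>
    have hs0 : 0 < s := hy0.trans hs.1
    rpow_div_map_div_le_of_le hp hy0 hs.1.le hs.2 (hG.pos_of_map_zero hG0 hs0)
      (hG.monotoneOn hs0.le (mem_Ici.2 (by positivity)) hs.2)
  have hlen : (y / G (2 * y)) ^ p / (2 * y) * (2 * y - y) = (y / G (2 * y)) ^ p / 2 := by
    field_simp
    ring
  linarith [hlen ▸ mul_sub_le_setIntegral_Ioi hint hnonneg hy (by linarith) hblock]

end Mydlarczyk

theorem mydlarczyk_implies_y_over_G_bounded_away_general
    (G : ℝ → ℝ)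
    (hGmono : StrictMonoOn G (Ici 0))
    (hG0 : G 0 = 0)
    (α δ : ℝ) (hα : 0 < α) (hδ : 0 < δ)
    (hint : IntegrableOn (fun s : ℝ => (s / G s) ^ (1 / α) / s) (Ioi δ) volume) :
    ∃ τ > (0:ℝ), ∃ C > (0:ℝ), ∀ y : ℝ, τ < y → y ≤ C * G y := by
  set I := ∫ s in Ioi δ, (s / G s) ^ (1 / α) / s
  have hI : 0 ≤ I := setIntegral_nonneg measurableSet_Ioi fun s hs =>
    hGmono.rpow_div_map_div_nonneg hG0 (hδ.trans hs)
  have hblock : ∀ y, δ ≤ y → (y / G (2 * y)) ^ (1 / α) ≤ 2 * I + 1 := fun y hy =>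
    (rpow_div_map_two_mul_le_two_mul_integral hGmono hG0 (by positivity) hδ hint hy).trans
      (by linarith)
  refine ⟨2 * δ, by positivity, 2 * (2 * I + 1) ^ α, by positivity, fun z hz => ?_⟩
  have hGz : 0 < G z := hGmono.pos_of_map_zero hG0 (by linarith)
  have hz := hblock (z / 2) (by linarith)
  rw [mul_div_cancel₀ z two_ne_zero, one_div,
    Real.rpow_inv_le_iff_of_pos (div_nonneg (by linarith) hGz.le) (by linarith) hα,
    div_le_iff₀ hGz] at hz
  linarith

/-- **Proposition 10.** If `G` satisfies the general conditions and the Mydlarczyk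
integral `∫_δ^∞ (s / G s)^{1/α} ds/s` converges for some `α > 0` and `δ > 0`, then
`y / G y` is bounded away from zero: there are `τ > 0` and `C > 0` with `y ≤ C · G y`
for all `y > τ`. -/
theorem mydlarczyk_implies_y_over_G_bounded_away
    (G : ℝ → ℝ)
    (hGcont : ContinuousOn G (Ici 0))
    (hGmono : StrictMonoOn G (Ici 0))
    (hGnonneg : ∀ y, 0 ≤ y → 0 ≤ G y)
    (hG0 : G 0 = 0)
    (α δ : ℝ) (hα : 0 < α) (hδ : 0 < δ)
    (hint : IntegrableOn (fun s : ℝ => (s / G s) ^ (1 / α) / s) (Ioi δ) volume) :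
    ∃ τ > (0:ℝ), ∃ C > (0:ℝ), ∀ y : ℝ, τ < y → y ≤ C * G y :=
  mydlarczyk_implies_y_over_G_bounded_away_general G hGmono hG0 α δ hα hδ hint
end
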